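/- Fix integers K ≥ m ≥ 1, ε > 0, c : T_{K,m} → [0,1/K], and let F = (f_1,…,f_m) : T_{K,m} → [K]^m be a collision-robust m-coloring of T_{K,m}. Let x^1, …, x^m ∈ [0,1]^K satisfy ‖x^X − x^Y‖_{ℓ∞} ≤ ε for all X, Y ∈ [m]. Then the m values f_X(P_{c,ε}(x^X)), for X = 1, …, m, are pairwise distinct. -/

import Mathlib

open Classical

noncomputable section

namespace MPB

variable (K m : ℕ)

/-- Max of `x` over a finite set of coordinates. -/
def fmax (x : Fin K → ℝ) (S : Finset (Fin K)) : ℝ := sSup (x '' ↑S)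

/-- Min of `x` over a finite set of coordinates. -/
def fmin (x : Fin K → ℝ) (S : Finset (Fin K)) : ℝ := sInf (x '' ↑S)

/-- range_B(x) = max_{k∈B} x(k) - min_{k∈B} x(k). -/
def rangeX (x : Fin K → ℝ) (B : Finset (Fin K)) : ℝ := fmax K x B - fmin K x B

/-- gap of the child obtained by splitting `B` into `T > B \ T`:
gap = min_{k∈T} x(k) - max_{ℓ∈B\T} x(ℓ). -/
def gapX (x : Fin K → ℝ) (T B : Finset (Fin K)) : ℝ := fmin K x T - fmax K x (B \ T)

/-- i(P): the largest `i` such that the first `i` parts of the ordered partition `L`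
have total size at most `m`. -/
def iIdx (L : List (Finset (Fin K))) : ℕ :=
  Nat.findGreatest (fun i => ((L.take i).map Finset.card).sum ≤ m) L.length

/-- A(P): the union of the first i(P) parts (the coordinates already identified as
belonging to the top m). -/
def Aset (L : List (Finset (Fin K))) : Finset (Fin K) :=
  (L.take (iIdx K m L)).foldr (· ∪ ·) ∅

/-- B(P): the currently undecided part; `∅` if `|A(P)| = m`, else the part S_{i(P)+1}. -/
def Bset (L : List (Finset (Fin K))) : Finset (Fin K) :=
  if (Aset K m L).card = m then ∅ else L.getD (iIdx K m L) ∅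

/-- A vertex of the tree T_{K,m} is encoded by the sequence of splits leading to it from
the root (head = most recently chosen top part): this recovers its underlying ordered
partition, by splitting at each step the then-current undecided set B into `T > B \ T`. -/
def partitionOf : List (Finset (Fin K)) → List (Finset (Fin K))
  | [] => [Finset.univ]
  | T :: l =>
    let L := partitionOf l
    let i := iIdx K m L
    L.take i ++ [T, L.getD i ∅ \ T] ++ L.drop (i + 1)

/-- A(P) for a vertex of T_{K,m}. -/
def Anode (l : List (Finset (Fin K))) : Finset (Fin K) := Aset K m (partitionOf K m l)

/-- B(P) for a vertex of T_{K,m}. -/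
def Bnode (l : List (Finset (Fin K))) : Finset (Fin K) := Bset K m (partitionOf K m l)

/-- Membership in T_{K,m}: each successive split must cut the current undecided set B
into a nonempty strict subset (the new top part) and the rest. The root is `[]`, a
vertex is a leaf iff its `Bnode` is empty, `T :: l` is a child of `l`, and the ancestors
of a vertex are exactly its list suffixes. -/
def Valid : List (Finset (Fin K)) → Prop
  | [] => True
  | T :: l => Valid l ∧ T.Nonempty ∧ T ⊂ Bnode K m l

/-- The elements of `B` sorted by `x` in (weakly) decreasing order,
ties broken by coordinate index (stability of merge sort). -/
def sortedB (x : Fin K → ℝ) (B : Finset (Fin K)) : List (Fin K) :=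
  (B.sort (· ≤ ·)).mergeSort (fun a b => decide (x b ≤ x a))

/-- The set `{a_1, …, a_j}` of the `j` largest coordinates of `B` under `x`. -/
def topSet (x : Fin K → ℝ) (B : Finset (Fin K)) (j : ℕ) : Finset (Fin K) :=
  ((sortedB K x B).take j).toFinset

/-- Line 7 of Algorithm 1: the algorithm, currently at the vertex `l`, returns `l`
because for some ancestor `q ⪯ l` and some child `q_j` of `q` (splitting B(q) at the
`j`-th position of the `x`-sorted order), the quantity `gap_{q_j}(x) - c(q)·range_q(x)`
is within `(d(l,q)+1)·6ε` of zero. -/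
def stopAt (c : List (Finset (Fin K)) → ℝ) (ε : ℝ) (x : Fin K → ℝ)
    (l : List (Finset (Fin K))) : Prop :=
  ∃ q ∈ l.tails, ∃ j, 1 ≤ j ∧ j < (Bnode K m q).card ∧
    |gapX K x (topSet K x (Bnode K m q) j) (Bnode K m q) - c q * rangeX K x (Bnode K m q)|
      ≤ ((l.length - q.length + 1 : ℕ) : ℝ) * (6 * ε)

/-- Lines 10-15 of Algorithm 1: move from `l` to the child `l_j` for the smallest
`j ∈ {1, …, ℓ-1}` with `gap_{l_j}(x) ≥ c(l)·range_l(x)`. -/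
def descend (c : List (Finset (Fin K)) → ℝ) (x : Fin K → ℝ)
    (l : List (Finset (Fin K))) : List (Finset (Fin K)) :=
  if h : ∃ j, 1 ≤ j ∧ j < (Bnode K m l).card ∧
      c l * rangeX K x (Bnode K m l)
        ≤ gapX K x (topSet K x (Bnode K m l) j) (Bnode K m l)
  then topSet K x (Bnode K m l) (Nat.find h) :: l
  else l

/-- The while loop of Algorithm 1, with fuel (the tree T_{K,m} has depth < K, so fuel K
suffices for the loop to terminate as in the paper). -/
def run (c : List (Finset (Fin K)) → ℝ) (ε : ℝ) (x : Fin K → ℝ) :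
    ℕ → List (Finset (Fin K)) → List (Finset (Fin K))
  | 0, l => l
  | n + 1, l =>
    if Bnode K m l = ∅ then l
    else if stopAt K m c ε x l then l
    else run c ε x n (descend K m c x l)

/-- The vertex P_{c,ε}(x) ∈ T_{K,m} output by Algorithm 1 on input x. The vertices
visited by the while loop are exactly the suffixes of the output. -/
def Pmap (c : List (Finset (Fin K)) → ℝ) (ε : ℝ) (x : Fin K → ℝ) :
    List (Finset (Fin K)) :=
  run K m c ε x K []

/-!
For `ε`-close inputs `x`, `y`, the top-`j` split of a set maximises the gap among all `j`-element
splits, so gaps at the top-`j` splits, ranges, and hence the margins `gap - c · range` tested by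
the algorithm, move by at most `4ε`. Where the run on `x` does not stop, every margin exceeds `6ε`
in absolute value, so its sign, and the chosen child, is the same for `y`. If one run stops at `P`
and the other does not, the other descends once more and then stops, as its tolerance has grown by
`6ε`. So the two outputs are equal or adjacent in `T_{K,m}`, and collision-robustness applies.
-/

lemma exists_mem_notMem_of_card_le_of_ne {α : Type*} {S T : Finset α}
    (hcard : T.card ≤ S.card) (hne : S ≠ T) : ∃ a ∈ S, a ∉ T := by
  by_contra! hsub
  exact hne (Finset.eq_of_subset_of_card_le hsub hcard)

section TopSplits

variable {K}
variable {x y : Fin K → ℝ} {S T B : Finset (Fin K)} {a b : Fin K} {r ε : ℝ} {j : ℕ}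

lemma le_fmax (ha : a ∈ S) : x a ≤ fmax K x S :=
  le_csSup (S.finite_toSet.image x).bddAbove ⟨a, ha, rfl⟩

lemma fmin_le (ha : a ∈ S) : fmin K x S ≤ x a :=
  csInf_le (S.finite_toSet.image x).bddBelow ⟨a, ha, rfl⟩

lemma fmax_le (hS : S.Nonempty) (h : ∀ a ∈ S, x a ≤ r) : fmax K x S ≤ r :=
  csSup_le (hS.to_set.image x) (by rintro _ ⟨a, ha, rfl⟩; exact h a ha)

lemma le_fmin (hS : S.Nonempty) (h : ∀ a ∈ S, r ≤ x a) : r ≤ fmin K x S :=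
  le_csInf (hS.to_set.image x) (by rintro _ ⟨a, ha, rfl⟩; exact h a ha)

lemma abs_fmax_sub_fmax_le (hS : S.Nonempty) (hxy : ∀ k, |x k - y k| ≤ ε) :
    |fmax K x S - fmax K y S| ≤ ε := by
  refine abs_sub_le_iff.mpr ⟨?_, ?_⟩ <;> rw [sub_le_iff_le_add] <;> refine fmax_le hS ?_
  · exact fun a ha => by linarith [(abs_sub_le_iff.mp (hxy a)).1, le_fmax (x := y) ha]
  · exact fun a ha => by linarith [(abs_sub_le_iff.mp (hxy a)).2, le_fmax (x := x) ha]

lemma abs_fmin_sub_fmin_le (hS : S.Nonempty) (hxy : ∀ k, |x k - y k| ≤ ε) :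
    |fmin K x S - fmin K y S| ≤ ε := by
  refine abs_sub_le_iff.mpr ⟨?_, ?_⟩ <;> rw [sub_le_comm] <;> refine le_fmin hS ?_
  · exact fun a ha => by linarith [(abs_sub_le_iff.mp (hxy a)).1, fmin_le (x := x) ha]
  · exact fun a ha => by linarith [(abs_sub_le_iff.mp (hxy a)).2, fmin_le (x := y) ha]

lemma rangeX_nonneg (hS : S.Nonempty) : 0 ≤ rangeX K x S := by
  obtain ⟨a, ha⟩ := hS
  rw [rangeX]
  linarith [fmin_le (x := x) ha, le_fmax (x := x) ha]

lemma abs_rangeX_sub_le (hS : S.Nonempty) (hxy : ∀ k, |x k - y k| ≤ ε) :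
    |rangeX K x S - rangeX K y S| ≤ 2 * ε := by
  have hmax := abs_le.mp (abs_fmax_sub_fmax_le hS hxy)
  have hmin := abs_le.mp (abs_fmin_sub_fmin_le hS hxy)
  rw [rangeX, rangeX, abs_le]
  constructor <;> linarith

lemma abs_gapX_sub_le (hT : T.Nonempty) (hBT : (B \ T).Nonempty)
    (hxy : ∀ k, |x k - y k| ≤ ε) :
    |gapX K x T B - gapX K y T B| ≤ 2 * ε := by
  have hmax := abs_le.mp (abs_fmax_sub_fmax_le hBT hxy)
  have hmin := abs_le.mp (abs_fmin_sub_fmin_le hT hxy)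
  rw [gapX, gapX, abs_le]
  constructor <;> linarith

lemma sortedB_perm (x : Fin K → ℝ) (B : Finset (Fin K)) :
    (sortedB K x B).Perm (B.sort (· ≤ ·)) :=
  List.mergeSort_perm _ _

lemma mem_sortedB : a ∈ sortedB K x B ↔ a ∈ B := by
  rw [(sortedB_perm x B).mem_iff, Finset.mem_sort]

lemma sortedB_nodup : (sortedB K x B).Nodup :=
  (sortedB_perm x B).nodup_iff.mpr (Finset.sort_nodup B _)

lemma sortedB_pairwise : (sortedB K x B).Pairwise (fun a b => x b ≤ x a) := by
  have h := List.pairwise_mergeSort (le := fun a b : Fin K => decide (x b ≤ x a))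
    (fun a b c hab hbc => by simp only [decide_eq_true_eq] at *; exact hbc.trans hab)
    (fun a b => by simpa using le_total (x b) (x a)) (B.sort (· ≤ ·))
  exact h.imp (by simp)

lemma topSet_subset : topSet K x B j ⊆ B := fun _ ha =>
  mem_sortedB.mp ((List.take_sublist _ _).mem (List.mem_toFinset.mp ha))

lemma card_topSet (hj : j ≤ B.card) : (topSet K x B j).card = j := by
  rw [topSet, List.toFinset_card_of_nodup (sortedB_nodup.sublist (List.take_sublist _ _)),
    List.length_take, (sortedB_perm x B).length_eq, Finset.length_sort]
  omega

lemma le_of_mem_topSet_of_mem_sdiff (ha : a ∈ topSet K x B j) (hb : b ∈ B \ topSet K x B j) :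
    x b ≤ x a := by
  have hsplit := List.take_append_drop j (sortedB K x B)
  have hsorted := sortedB_pairwise (x := x) (B := B)
  rw [← hsplit, List.pairwise_append] at hsorted
  have hb' : b ∈ (sortedB K x B).take j ++ (sortedB K x B).drop j := by
    rw [hsplit, mem_sortedB]; exact (Finset.mem_sdiff.mp hb).1
  rcases List.mem_append.mp hb' with hbt | hbd
  · exact absurd (List.mem_toFinset.mpr hbt) (Finset.mem_sdiff.mp hb).2
  · exact hsorted.2.2 a (List.mem_toFinset.mp ha) b hbd

lemma gapX_le_gapX_topSet (hSB : S ⊆ B) (hS : S.card = j) (hj : j ≤ B.card) :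
    gapX K x S B ≤ gapX K x (topSet K x B j) B := by
  set T := topSet K x B j
  have hcard : S.card = T.card := by rw [hS, card_topSet hj]
  rcases eq_or_ne S T with rfl | hne
  · exact le_rfl
  obtain ⟨a, haS, haT⟩ := exists_mem_notMem_of_card_le_of_ne hcard.ge hne
  obtain ⟨t, htT, htS⟩ := exists_mem_notMem_of_card_le_of_ne hcard.le hne.symm
  have haBT : a ∈ B \ T := Finset.mem_sdiff.mpr ⟨hSB haS, haT⟩
  have h1 : fmin K x S ≤ fmin K x T :=
    (fmin_le haS).trans (le_fmin ⟨t, htT⟩ fun _ h => le_of_mem_topSet_of_mem_sdiff h haBT)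
  have h2 : fmax K x (B \ T) ≤ fmax K x (B \ S) :=
    (fmax_le ⟨a, haBT⟩ fun _ h => le_of_mem_topSet_of_mem_sdiff htT h).trans
      (le_fmax (Finset.mem_sdiff.mpr ⟨topSet_subset htT, htS⟩))
  rw [gapX, gapX]
  linarith

lemma abs_gapX_topSet_sub_le (hxy : ∀ k, |x k - y k| ≤ ε) (h1 : 1 ≤ j) (h2 : j < B.card) :
    |gapX K x (topSet K x B j) B - gapX K y (topSet K y B j) B| ≤ 2 * ε := by
  have hyx : ∀ k, |y k - x k| ≤ ε := fun k => (abs_sub_comm _ _).trans_le (hxy k)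
  have hne (z : Fin K → ℝ) : (topSet K z B j).Nonempty ∧ (B \ topSet K z B j).Nonempty := by
    have hcard := card_topSet (x := z) h2.le
    refine ⟨Finset.card_pos.mp (by omega), Finset.sdiff_nonempty.mpr fun h => ?_⟩
    have := Finset.card_le_card h
    omega
  have hx := gapX_le_gapX_topSet (x := x) topSet_subset (card_topSet (x := y) h2.le) h2.le
  have hy := gapX_le_gapX_topSet (x := y) topSet_subset (card_topSet (x := x) h2.le) h2.le
  have hx' := abs_le.mp (abs_gapX_sub_le (hne x).1 (hne x).2 hxy)
  have hy' := abs_le.mp (abs_gapX_sub_le (hne y).1 (hne y).2 hyx)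
  rw [abs_le]
  constructor <;> linarith

lemma topSet_eq_of_two_mul_lt_gapX (hxy : ∀ k, |x k - y k| ≤ ε) (hj : j ≤ B.card)
    (hgap : 2 * ε < gapX K x (topSet K x B j) B) :
    topSet K x B j = topSet K y B j := by
  by_contra hne
  have hcard : (topSet K x B j).card = (topSet K y B j).card := by
    rw [card_topSet hj, card_topSet hj]
  obtain ⟨a, hax, hay⟩ := exists_mem_notMem_of_card_le_of_ne hcard.ge hne
  obtain ⟨b, hby, hbx⟩ := exists_mem_notMem_of_card_le_of_ne hcard.le (Ne.symm hne)
  have hyab : y a ≤ y b :=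
    le_of_mem_topSet_of_mem_sdiff hby (Finset.mem_sdiff.mpr ⟨topSet_subset hax, hay⟩)
  have hxa : fmin K x (topSet K x B j) ≤ x a := fmin_le hax
  have hxb : x b ≤ fmax K x (B \ topSet K x B j) :=
    le_fmax (Finset.mem_sdiff.mpr ⟨topSet_subset hby, hbx⟩)
  rw [gapX] at hgap
  linarith [(abs_sub_le_iff.mp (hxy a)).1, (abs_sub_le_iff.mp (hxy b)).2]

end TopSplits

def margin (c : List (Finset (Fin K)) → ℝ) (x : Fin K → ℝ) (q : List (Finset (Fin K)))
    (j : ℕ) : ℝ :=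
  gapX K x (topSet K x (Bnode K m q) j) (Bnode K m q) - c q * rangeX K x (Bnode K m q)

section Algorithm

variable {K m}
variable {c : List (Finset (Fin K)) → ℝ} {ε : ℝ} {x y : Fin K → ℝ}
  {l q : List (Finset (Fin K))} {T : Finset (Fin K)} {j : ℕ}

lemma abs_margin_sub_le (hc : c q ∈ Set.Icc 0 1) (hxy : ∀ k, |x k - y k| ≤ ε)
    (h1 : 1 ≤ j) (h2 : j < (Bnode K m q).card) :
    |margin K m c x q j - margin K m c y q j| ≤ 4 * ε := by
  have hB : (Bnode K m q).Nonempty := Finset.card_pos.mp (by omega)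
  have hgap := abs_le.mp (abs_gapX_topSet_sub_le hxy h1 h2)
  have hrange : |c q * rangeX K x (Bnode K m q) - c q * rangeX K y (Bnode K m q)| ≤ 2 * ε := by
    rw [← mul_sub, abs_mul, abs_of_nonneg hc.1]
    exact (mul_le_of_le_one_left (abs_nonneg _) hc.2).trans (abs_rangeX_sub_le hB hxy)
  have hrange' := abs_le.mp hrange
  rw [margin, margin, abs_le]
  constructor <;> linarith

lemma Valid.of_suffix (h : q <:+ l) (hl : Valid K m l) : Valid K m q := by
  induction l with
  | nil => rw [List.suffix_nil.mp h]; trivial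
  | cons T l ih =>
    rcases List.suffix_cons_iff.mp h with rfl | h'
    · exact hl
    · exact ih h' hl.1

lemma valid_descend (hl : Valid K m l) : Valid K m (descend K m c x l) := by
  unfold descend
  split_ifs with h
  · obtain ⟨h1, h2, _⟩ := Nat.find_spec h
    have hcard := card_topSet (x := x) h2.le
    exact ⟨hl, Finset.card_pos.mp (by omega),
      Finset.ssubset_iff_subset_ne.mpr ⟨topSet_subset, fun h => by rw [h] at hcard; omega⟩⟩
  · exact hl

lemma descend_eq_self_or_cons :
    descend K m c x l = l ∨ ∃ T, descend K m c x l = T :: l := by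
  unfold descend
  split_ifs <;> simp

lemma run_of_stopAt (h : stopAt K m c ε x l) : ∀ n, run K m c ε x n l = l
  | 0 => rfl
  | n + 1 => by rw [run]; split_ifs <;> rfl

lemma run_of_descend_eq_self (h : descend K m c x l = l) : ∀ n, run K m c ε x n l = l
  | 0 => rfl
  | n + 1 => by rw [run]; split_ifs <;> simp only [h, run_of_descend_eq_self h n]

lemma valid_run : ∀ n l, Valid K m l → Valid K m (run K m c ε x n l)
  | 0, _, hl => hl
  | n + 1, l, hl => by
    rw [run]
    split_ifs
    · exact hl
    · exact hl
    · exact valid_run n _ (valid_descend hl)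

lemma stopAt_cons_of_stopAt (hε : 0 ≤ ε) (hxy : ∀ k, |x k - y k| ≤ ε)
    (hc : ∀ q, Valid K m q → c q ∈ Set.Icc 0 1) (hl : Valid K m l)
    (h : stopAt K m c ε x l) : stopAt K m c ε y (T :: l) := by
  obtain ⟨q, hq, j, h1, h2, hstop⟩ := h
  rw [List.mem_tails] at hq
  refine ⟨q, (List.mem_tails _ _).mpr (hq.trans (List.suffix_cons T l)), j, h1, h2, ?_⟩
  have hmargin := abs_margin_sub_le (hc q (hl.of_suffix hq)) hxy h1 h2
  have hlen : ((T :: l).length - q.length + 1 : ℕ) = (l.length - q.length + 1) + 1 := by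
    have := hq.length_le
    simp only [List.length_cons]
    omega
  rw [hlen, Nat.cast_add, Nat.cast_one, add_mul, one_mul]
  change |margin K m c y q j| ≤ _
  change |margin K m c x q j| ≤ _ at hstop
  linarith [abs_sub_abs_le_abs_sub (margin K m c y q j) (margin K m c x q j),
    abs_sub_comm (margin K m c y q j) (margin K m c x q j)]

lemma descend_eq_of_not_stopAt (hε : 0 < ε) (hxy : ∀ k, |x k - y k| ≤ ε)
    (hc : c l ∈ Set.Icc 0 1) (hs : ¬ stopAt K m c ε x l) :
    descend K m c x l = descend K m c y l := by
  have hwide : ∀ j, 1 ≤ j → j < (Bnode K m l).card → 6 * ε < |margin K m c x l j| :=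
    fun j h1 h2 => lt_of_not_ge fun hle =>
      hs ⟨l, (List.mem_tails _ _).mpr List.suffix_rfl, j, h1, h2, by simpa [margin] using hle⟩
  have hpos : ∀ j, 1 ≤ j → j < (Bnode K m l).card → 0 ≤ margin K m c x l j →
      6 * ε < margin K m c x l j := fun j h1 h2 h0 => by
    simpa only [abs_of_nonneg h0] using hwide j h1 h2
  have key : ∀ {j}, (1 ≤ j ∧ j < (Bnode K m l).card ∧
        c l * rangeX K x (Bnode K m l) ≤ gapX K x (topSet K x (Bnode K m l) j) (Bnode K m l)) ↔
      (1 ≤ j ∧ j < (Bnode K m l).card ∧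
        c l * rangeX K y (Bnode K m l) ≤
          gapX K y (topSet K y (Bnode K m l) j) (Bnode K m l)) := by
    refine fun {j} => and_congr_right fun h1 => and_congr_right fun h2 => ?_
    have hdiff := abs_le.mp (abs_margin_sub_le hc hxy h1 h2)
    refine (sub_nonneg.symm.trans ?_).trans sub_nonneg
    change 0 ≤ margin K m c x l j ↔ 0 ≤ margin K m c y l j
    rcases lt_abs.mp (hwide j h1 h2) with h | h <;> constructor <;> intro <;> linarith
  unfold descend
  by_cases h : ∃ j, 1 ≤ j ∧ j < (Bnode K m l).card ∧
      c l * rangeX K x (Bnode K m l) ≤ gapX K x (topSet K x (Bnode K m l) j) (Bnode K m l)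
  · have h' := h.imp fun _ => key.mp
    rw [dif_pos h, dif_pos h', Nat.find_congr' (hq := h') key]
    obtain ⟨h1, h2, h3⟩ := key.mpr (Nat.find_spec h')
    have hB : (Bnode K m l).Nonempty := Finset.card_pos.mp (by omega)
    have hrange := mul_nonneg hc.1 (rangeX_nonneg (x := x) hB)
    have hmargin := hpos _ h1 h2 (sub_nonneg.mpr h3)
    rw [margin] at hmargin
    rw [topSet_eq_of_two_mul_lt_gapX hxy h2.le (by linarith)]
  · rw [dif_neg h, dif_neg fun h' => h (h'.imp fun _ => key.mpr)]

def DistLeOne (P Q : List (Finset (Fin K))) : Prop :=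
  P = Q ∨ (∃ T, P = T :: Q) ∨ (∃ T, Q = T :: P)

lemma DistLeOne.symm {P Q : List (Finset (Fin K))} (h : DistLeOne P Q) : DistLeOne Q P := by
  rcases h with h | h | h
  · exact Or.inl h.symm
  · exact Or.inr (Or.inr h)
  · exact Or.inr (Or.inl h)

lemma distLeOne_run_descend_of_stopAt (hε : 0 ≤ ε) (hxy : ∀ k, |x k - y k| ≤ ε)
    (hc : ∀ q, Valid K m q → c q ∈ Set.Icc 0 1) (hl : Valid K m l)
    (hs : stopAt K m c ε x l) (n : ℕ) :
    DistLeOne l (run K m c ε y n (descend K m c y l)) := by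
  rcases descend_eq_self_or_cons (c := c) (x := y) (l := l) with h | ⟨T, h⟩
  · rw [h, run_of_descend_eq_self h]
    exact Or.inl rfl
  · rw [h, run_of_stopAt (stopAt_cons_of_stopAt hε hxy hc hl hs)]
    exact Or.inr (Or.inr ⟨T, rfl⟩)

lemma distLeOne_run (hε : 0 < ε) (hxy : ∀ k, |x k - y k| ≤ ε)
    (hc : ∀ q, Valid K m q → c q ∈ Set.Icc 0 1) :
    ∀ n l, Valid K m l → DistLeOne (run K m c ε x n l) (run K m c ε y n l)
  | 0, _, _ => Or.inl rfl
  | n + 1, l, hl => by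
    have hyx : ∀ k, |y k - x k| ≤ ε := fun k => (abs_sub_comm _ _).trans_le (hxy k)
    rw [run, run]
    split_ifs with hB hsx hsy hsy
    · exact Or.inl rfl
    · exact Or.inl rfl
    · exact distLeOne_run_descend_of_stopAt hε.le hxy hc hl hsx n
    · exact (distLeOne_run_descend_of_stopAt hε.le hyx hc hl hsy n).symm
    · rw [descend_eq_of_not_stopAt hε hxy (hc l hl) hsx]
      exact distLeOne_run hε hxy hc n _ (valid_descend hl)

end Algorithm

theorem stmt13_general (K m : ℕ) (ε : ℝ) (hε : 0 < ε)
    (c : List (Finset (Fin K)) → ℝ)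
    (hc : ∀ l, Valid K m l → c l ∈ Set.Icc (0 : ℝ) (1 / K))
    (F : List (Finset (Fin K)) → Fin m → Fin K)
    (hrobust : ∀ P Q : List (Finset (Fin K)), Valid K m P → Valid K m Q →
      (P = Q ∨ (∃ T, P = T :: Q) ∨ (∃ T, Q = T :: P)) →
      ∀ i j : Fin m, F P i = F Q j → i = j)
    (xs : Fin m → Fin K → ℝ)
    (hclose : ∀ X Y i, |xs X i - xs Y i| ≤ ε) :
    ∀ X Y : Fin m, X ≠ Y →
      F (Pmap K m c ε (xs X)) X ≠ F (Pmap K m c ε (xs Y)) Y := by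
  intro X Y hXY hF
  have hc' : ∀ l, Valid K m l → c l ∈ Set.Icc (0 : ℝ) 1 := fun l hl =>
    Set.Icc_subset_Icc_right (by rw [one_div]; exact Nat.cast_inv_le_one K) (hc l hl)
  have hdist := distLeOne_run hε (hclose X Y) hc' K [] trivial
  exact hXY (hrobust _ _ (valid_run K [] trivial) (valid_run K [] trivial) hdist X Y hF)

/-- The no-collision argument of Theorem 3.2: if F is a collision-robust m-coloring of
T_{K,m} and the m players' estimates x^1, …, x^m are pairwise ε-close in ℓ∞, then the
arms f_X(P_{c,ε}(x^X)), X ∈ [m], are pairwise distinct. -/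
theorem stmt13 (K m : ℕ) (hm : 1 ≤ m) (hK : m ≤ K) (ε : ℝ) (hε : 0 < ε)
    (c : List (Finset (Fin K)) → ℝ)
    (hc : ∀ l, Valid K m l → c l ∈ Set.Icc (0 : ℝ) (1 / K))
    (F : List (Finset (Fin K)) → Fin m → Fin K)
    (hrobust : ∀ P Q : List (Finset (Fin K)), Valid K m P → Valid K m Q →
      (P = Q ∨ (∃ T, P = T :: Q) ∨ (∃ T, Q = T :: P)) →
      ∀ i j : Fin m, F P i = F Q j → i = j)
    (xs : Fin m → Fin K → ℝ)
    (hxs : ∀ X i, xs X i ∈ Set.Icc (0 : ℝ) 1)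
    (hclose : ∀ X Y i, |xs X i - xs Y i| ≤ ε) :
    ∀ X Y : Fin m, X ≠ Y →
      F (Pmap K m c ε (xs X)) X ≠ F (Pmap K m c ε (xs Y)) Y :=
  stmt13_general K m ε hε c hc F hrobust xs hclose

end MPB
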